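/- Let ρ_k = 1/2 for all k ≥ 1, and for each k ≥ 1 let P_k be the k×k matrix with ones on the diagonal and all off-diagonal entries equal to 1/2. Then each P_k is invertible, and the partial autocorrelations defined by α_1 = ρ_1 and, for k ≥ 2, α_k = (ρ_k − ρ_{k−1}ᵀ P_{k−1}⁻¹ ρ̄_{k−1})/(1 − ρ_{k−1}ᵀ P_{k−1}⁻¹ ρ_{k−1}) satisfy α_k = 1/(k+1) for all k ≥ 1. -/

import Mathlib

open Matrix

noncomputable section

/-- The `k×k` Toeplitz correlation matrix for `ρ_k ≡ 1/2`: ones on the diagonal and all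
off-diagonal entries equal to `1/2`. -/
def Pmat (k : ℕ) : Matrix (Fin k) (Fin k) ℝ := fun i j => if i = j then 1 else 1 / 2

/-- The vector `(ρ_1,…,ρ_k)ᵀ` for `ρ_k ≡ 1/2`. -/
def rhoVec (k : ℕ) : Fin k → ℝ := fun _ => 1 / 2

/-- The partial autocorrelations defined from `ρ_k ≡ 1/2`: `α_1 = ρ_1` and, for `k ≥ 2`,
`α_k = (ρ_k − ρ_{k−1}ᵀ P_{k−1}⁻¹ ρ̄_{k−1})/(1 − ρ_{k−1}ᵀ P_{k−1}⁻¹ ρ_{k−1})`,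
where `ρ̄` denotes the reversed vector. -/
def alphaPacf (k : ℕ) : ℝ :=
  if k = 1 then 1 / 2
  else ((1 : ℝ) / 2 - rhoVec (k - 1) ⬝ᵥ ((Pmat (k - 1))⁻¹ *ᵥ fun i => rhoVec (k - 1) i.rev)) /
    (1 - rhoVec (k - 1) ⬝ᵥ ((Pmat (k - 1))⁻¹ *ᵥ rhoVec (k - 1)))

def Qmat (k : ℕ) : Matrix (Fin k) (Fin k) ℝ :=
  fun i j => (if i = j then 2 else 0) - 2 / ((k : ℝ) + 1)

lemma PQ (k : ℕ) : Pmat k * Qmat k = 1 := by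
  ext i j
  have hk : ((k : ℝ) + 1) ≠ 0 := by positivity
  simp only [Matrix.mul_apply, Pmat, Qmat, Matrix.one_apply]
  rw [Finset.sum_congr rfl (fun l _ => by ring_nf : ∀ l ∈ Finset.univ,
    (if i = l then (1:ℝ) else 1/2) * ((if l = j then 2 else 0) - 2/((k:ℝ)+1)) =
      (if i = l then (1:ℝ) else 1/2) * (if l = j then 2 else 0)
      - (if i = l then (1:ℝ) else 1/2) * (2/((k:ℝ)+1)))]
  rw [Finset.sum_sub_distrib]
  have h1 : ∑ l : Fin k, (if i = l then (1:ℝ) else 1/2) * (if l = j then 2 else 0)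
      = if i = j then 2 else 1 := by
    simp [mul_ite, Finset.sum_ite_eq]
  have h2 : ∑ l : Fin k, (if i = l then (1:ℝ) else 1/2) * (2/((k:ℝ)+1))
      = ((k:ℝ) + 1) / ((k:ℝ)+1) := by
    have : ∑ l : Fin k, (if i = l then (1:ℝ) else 1/2)
        = 1/2 + (k:ℝ)/2 := by
      have := Finset.sum_ite_eq Finset.univ i (fun _ => (1:ℝ) - 1/2)
      simp only [Finset.mem_univ, if_true] at this
      calc ∑ l : Fin k, (if i = l then (1:ℝ) else 1/2)
          = ∑ l : Fin k, ((if i = l then (1:ℝ) - 1/2 else 0) + 1/2) := by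
            apply Finset.sum_congr rfl; intro l _; split <;> ring
        _ = 1/2 + (k:ℝ)/2 := by
            rw [Finset.sum_add_distrib, this]
            simp; ring
    rw [← Finset.sum_mul, this]
    field_simp; ring
  rw [h1, h2, div_self hk]
  split <;> norm_num

lemma Pinv (k : ℕ) : (Pmat k)⁻¹ = Qmat k := Matrix.inv_eq_right_inv (PQ k)

lemma Qmul (k : ℕ) : Qmat k *ᵥ rhoVec k = fun _ => 1 / ((k:ℝ) + 1) := by
  have hk : ((k : ℝ) + 1) ≠ 0 := by positivity
  funext i
  simp only [Matrix.mulVec, dotProduct, Qmat, rhoVec]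
  rw [Finset.sum_congr rfl (show ∀ l ∈ Finset.univ,
    ((if i = l then (2:ℝ) else 0) - 2/((k:ℝ)+1)) * (1/2) =
      (if i = l then (1:ℝ) else 0) - 1/((k:ℝ)+1) from fun l _ => by split <;> ring)]
  rw [Finset.sum_sub_distrib]
  simp [Finset.sum_ite_eq]
  field_simp
  ring

lemma dotconst (k : ℕ) : rhoVec k ⬝ᵥ (fun _ => 1 / ((k:ℝ) + 1)) = (k:ℝ) / (2*((k:ℝ)+1)) := by
  have hk : ((k : ℝ) + 1) ≠ 0 := by positivity
  simp [dotProduct, rhoVec, Finset.sum_const]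
  field_simp

/-- each `P_k` is invertible and the partial autocorrelations of the
constant sequence `ρ_k = 1/2` are `α_k = 1/(k+1)` for all `k ≥ 1`. -/
theorem pacf_of_constant_half :
    (∀ k : ℕ, 1 ≤ k → IsUnit (Pmat k)) ∧
    (∀ k : ℕ, 1 ≤ k → alphaPacf k = 1 / ((k : ℝ) + 1)) := by
  constructor
  · intro k _
    exact ⟨⟨Pmat k, Qmat k, PQ k, mul_eq_one_comm.mp (PQ k)⟩, rfl⟩
  · intro k hk
    rcases eq_or_lt_of_le hk with h1 | h2
    · simp [alphaPacf, ← h1]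
      norm_num
    · have hk1 : k ≠ 1 := by omega
      set n := k - 1 with hn
      have hkn : k = n + 1 := by omega
      have hrev : (fun i => rhoVec n i.rev) = rhoVec n := rfl
      have hnR : ((n:ℝ) + 1) ≠ 0 := by positivity
      rw [alphaPacf, if_neg hk1, hrev, Pinv, Qmul, dotconst]
      rw [show ((k - 1 : ℕ) : ℝ) = (k : ℝ) - 1 from by
        rw [Nat.cast_sub hk]; norm_num]
      set x := (k : ℝ) with hx
      have hx0 : x ≠ 0 := by
        have : (1:ℝ) ≤ x := by rw [hx]; exact_mod_cast hk
        linarith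
      have hx1 : x + 1 ≠ 0 := by
        have : (1:ℝ) ≤ x := by rw [hx]; exact_mod_cast hk
        linarith
      have hnum : 1/2 - (x-1)/(2*x) = 1/(2*x) := by field_simp; try ring
      have hden : 1 - (x-1)/(2*x) = (x+1)/(2*x) := by field_simp; try ring
      rw [show x - 1 + 1 = x from by ring, hnum, hden]
      rw [div_div_div_cancel_right₀]
      · exact mul_ne_zero two_ne_zero hx0


end
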